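/- For λ > 0, the function F(r,x₅) = (1-3x₅)(λ+r²)^{1/8}√r + ∫₀^{√r} 2λ/(λ+x⁴)^{7/8} dx on [0,∞) × [-1,1] satisfies: ∂F/∂x₅ = -3(λ+r²)^{1/8}√r for r > 0; for fixed r > 0, x₅ ↦ F(r,x₅) is strictly decreasing; r ↦ F(r,-1) is strictly increasing on [0,∞) with F(0,-1)=0 and F(r,-1) → +∞ as r → ∞; and r ↦ F(r,1) is strictly decreasing on [0,∞) with F(0,1)=0 and F(r,1) → -∞ as r → ∞. -/

import Mathlib

open Real Filter

/-- The function `F(r, x₅) = (1-3x₅)(λ+r²)^{1/8}√r + ∫₀^{√r} 2λ/(λ+x⁴)^{7/8} dx`. -/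
noncomputable def F (lam r x : ℝ) : ℝ :=
  (1 - 3 * x) * (lam + r ^ 2) ^ ((1 : ℝ) / 8) * Real.sqrt r +
    ∫ t in (0 : ℝ)..Real.sqrt r, 2 * lam / (lam + t ^ 4) ^ ((7 : ℝ) / 8)


noncomputable def gfun (lam t : ℝ) : ℝ := 2 * lam / (lam + t ^ 4) ^ ((7:ℝ)/8)

noncomputable def Gc (lam c u : ℝ) : ℝ :=
  c * (lam + u ^ 4) ^ ((1:ℝ)/8) * u + ∫ t in (0:ℝ)..u, gfun lam t

lemma gcont {lam : ℝ} (hlam : 0 < lam) : Continuous (gfun lam) := by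
  apply continuous_const.div
  · exact (continuous_const.add (continuous_pow 4)).rpow_const fun t => Or.inl (by show lam + t ^ 4 ≠ 0; positivity)
  · intro t
    positivity

lemma hasDerivAt_Gc {lam : ℝ} (hlam : 0 < lam) (c u : ℝ) :
    HasDerivAt (Gc lam c)
      ((c * (lam + u ^ 4) + c / 2 * u ^ 4 + 2 * lam) * (lam + u ^ 4) ^ (-(7:ℝ)/8)) u := by
  have hs : 0 < lam + u ^ 4 := by positivity
  have h1 : HasDerivAt (fun u : ℝ => lam + u ^ 4) (4 * u ^ 3) u := by
    simpa using (hasDerivAt_pow 4 u).const_add lam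
  have h2 : HasDerivAt (fun y : ℝ => y ^ ((1:ℝ)/8))
      (((1:ℝ)/8) * (lam + u ^ 4) ^ ((1:ℝ)/8 - 1)) (lam + u ^ 4) :=
    Real.hasDerivAt_rpow_const (Or.inl hs.ne')
  have h3 := (h2.comp u h1).mul (hasDerivAt_id u)
  have h4 : HasDerivAt (fun u : ℝ => ∫ t in (0:ℝ)..u, gfun lam t) (gfun lam u) u := by
    exact intervalIntegral.integral_hasDerivAt_right ((gcont hlam).intervalIntegrable 0 u)
      ((gcont hlam).stronglyMeasurableAtFilter _ _) (gcont hlam).continuousAt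
  have h5 := (h3.const_mul c).add h4
  have e1 : (lam + u ^ 4) ^ ((1:ℝ)/8 - 1) = (lam + u ^ 4) ^ (-(7:ℝ)/8) := by norm_num
  have e2 : (lam + u ^ 4) ^ ((1:ℝ)/8) = (lam + u ^ 4) * (lam + u ^ 4) ^ (-(7:ℝ)/8) := by
    rw [← Real.rpow_one_add' hs.le (by norm_num)]
    norm_num
  have e3 : gfun lam u = 2 * lam * (lam + u ^ 4) ^ (-(7:ℝ)/8) := by
    rw [gfun, div_eq_mul_inv, ← Real.rpow_neg hs.le]
    norm_num
  simp only [Function.comp_def, id_eq, mul_one] at h5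
  have h6 : Gc lam c = fun x => c * ((lam + x ^ 4) ^ ((1:ℝ)/8) * x) + ∫ t in (0:ℝ)..x, gfun lam t := by
    funext v; rw [Gc]; ring
  rw [h6]
  refine h5.congr_deriv ?_
  rw [e1, e2, e3]
  ring

lemma F_eq (lam r x : ℝ) (hr : 0 ≤ r) : F lam r x = Gc lam (1 - 3 * x) (Real.sqrt r) := by
  have h4 : Real.sqrt r ^ 4 = r ^ 2 := by
    rw [show (4:ℕ) = 2 * 2 from rfl, pow_mul, Real.sq_sqrt hr]
  rw [F, Gc, h4]
  rfl

lemma sqrt_tendsto_atTop : Filter.Tendsto Real.sqrt Filter.atTop Filter.atTop := by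
  have h := tendsto_rpow_atTop (show (0:ℝ) < 1/2 by norm_num)
  exact h.congr fun x => (Real.sqrt_eq_rpow x).symm


/-- Derivative and monotonicity properties of `F` on `[0,∞) × [-1,1]`. -/
theorem F_properties (lam : ℝ) (hlam : 0 < lam) :
    -- ∂F/∂x₅ = -3(λ+r²)^{1/8}√r for r > 0
    (∀ r x : ℝ, 0 < r →
      HasDerivAt (fun x' => F lam r x') (-3 * (lam + r ^ 2) ^ ((1 : ℝ) / 8) * Real.sqrt r) x) ∧
    -- for fixed r > 0, x₅ ↦ F(r,x₅) is strictly decreasing on [-1,1]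
    (∀ r : ℝ, 0 < r → StrictAntiOn (fun x => F lam r x) (Set.Icc (-1) 1)) ∧
    -- r ↦ F(r,-1) is strictly increasing on [0,∞), F(0,-1) = 0, F(r,-1) → +∞
    StrictMonoOn (fun r => F lam r (-1)) (Set.Ici 0) ∧
    F lam 0 (-1) = 0 ∧
    Tendsto (fun r => F lam r (-1)) atTop atTop ∧
    -- r ↦ F(r,1) is strictly decreasing on [0,∞), F(0,1) = 0, F(r,1) → -∞
    StrictAntiOn (fun r => F lam r 1) (Set.Ici 0) ∧
    F lam 0 1 = 0 ∧
    Tendsto (fun r => F lam r 1) atTop atBot := by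
  refine ⟨?_, ?_, ?_, ?_, ?_, ?_, ?_, ?_⟩
  · -- derivative in x
    intro r x hr
    have hA : HasDerivAt (fun x' : ℝ => 1 - 3 * x') (-3) x := by
      simpa using ((hasDerivAt_id x).const_mul (3:ℝ)).const_sub (1:ℝ)
    have h := ((hA.mul_const ((lam + r ^ 2) ^ ((1:ℝ)/8))).mul_const (Real.sqrt r)).add_const
      (∫ t in (0:ℝ)..Real.sqrt r, 2 * lam / (lam + t ^ 4) ^ ((7:ℝ)/8))
    simpa [F] using h
  · -- strict anti in x
    intro r hr x hx y hy hxy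
    have hB : 0 < (lam + r ^ 2) ^ ((1:ℝ)/8) := Real.rpow_pos_of_pos (by positivity) _
    have hs : 0 < Real.sqrt r := Real.sqrt_pos.2 hr
    simp only [F]
    nlinarith [mul_pos hB hs, hxy]
  · -- strict mono in r at x = -1
    have hGmono : StrictMonoOn (Gc lam 4) (Set.Ici 0) := by
      apply strictMonoOn_of_deriv_pos (convex_Ici 0)
        (fun u _ => ((hasDerivAt_Gc hlam 4 u).continuousAt).continuousWithinAt)
      intro u hu
      rw [(hasDerivAt_Gc hlam 4 u).deriv]
      have hs : 0 < lam + u ^ 4 := by positivity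
      have hp : (0:ℝ) < (lam + u ^ 4) ^ (-(7:ℝ)/8) := Real.rpow_pos_of_pos hs _
      have hu4 : (0:ℝ) ≤ u ^ 4 := by positivity
      nlinarith [hp, hu4, hlam]
    intro r1 hr1 r2 hr2 h12
    simp only
    rw [F_eq lam r1 _ hr1, F_eq lam r2 _ hr2, show (1:ℝ) - 3 * (-1) = 4 by norm_num]
    exact hGmono (Real.sqrt_nonneg r1) (Real.sqrt_nonneg r2) (Real.sqrt_lt_sqrt hr1 h12)
  · simp [F]
  · -- tendsto atTop
    have key : ∀ r : ℝ, 0 ≤ r → 4 * lam ^ ((1:ℝ)/8) * Real.sqrt r ≤ F lam r (-1) := by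
      intro r hr
      rw [F]
      have hI : 0 ≤ ∫ t in (0:ℝ)..Real.sqrt r, 2 * lam / (lam + t ^ 4) ^ ((7:ℝ)/8) :=
        intervalIntegral.integral_nonneg (Real.sqrt_nonneg r) (fun t _ => by positivity)
      have hB : lam ^ ((1:ℝ)/8) ≤ (lam + r ^ 2) ^ ((1:ℝ)/8) :=
        Real.rpow_le_rpow hlam.le (by nlinarith [sq_nonneg r]) (by norm_num)
      nlinarith [Real.sqrt_nonneg r, mul_le_mul_of_nonneg_right hB (Real.sqrt_nonneg r)]
    have htend : Tendsto (fun r : ℝ => 4 * lam ^ ((1:ℝ)/8) * Real.sqrt r) atTop atTop :=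
      Tendsto.const_mul_atTop (by positivity) sqrt_tendsto_atTop
    exact tendsto_atTop_mono' atTop
      (by filter_upwards [eventually_ge_atTop (0:ℝ)] with r hr using key r hr) htend
  · -- strict anti in r at x = 1
    have hGanti : StrictAntiOn (Gc lam (-2)) (Set.Ici 0) := by
      apply strictAntiOn_of_deriv_neg (convex_Ici 0)
        (fun u _ => ((hasDerivAt_Gc hlam (-2) u).continuousAt).continuousWithinAt)
      intro u hu
      rw [interior_Ici] at hu
      rw [(hasDerivAt_Gc hlam (-2) u).deriv]
      have hs : 0 < lam + u ^ 4 := by positivity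
      have hp : (0:ℝ) < (lam + u ^ 4) ^ (-(7:ℝ)/8) := Real.rpow_pos_of_pos hs _
      have hu4 : (0:ℝ) < u ^ 4 := pow_pos hu 4
      nlinarith [hp, hu4]
    intro r1 hr1 r2 hr2 h12
    simp only
    rw [F_eq lam r1 _ hr1, F_eq lam r2 _ hr2, show (1:ℝ) - 3 * 1 = -2 by norm_num]
    exact hGanti (Real.sqrt_nonneg r1) (Real.sqrt_nonneg r2) (Real.sqrt_lt_sqrt hr1 h12)
  · simp [F]
  · -- tendsto atBot
    set u0 : ℝ := 1 + lam with hu0def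
    have hu01 : (1:ℝ) < u0 := by simp only [hu0def]; linarith
    have hK : AntitoneOn (fun u => Gc lam (-2) u + u) (Set.Ici u0) := by
      apply antitoneOn_of_deriv_nonpos (convex_Ici u0)
        (fun u _ => (((hasDerivAt_Gc hlam (-2) u).add (hasDerivAt_id u)).continuousAt).continuousWithinAt)
        (fun u _ => (((hasDerivAt_Gc hlam (-2) u).add (hasDerivAt_id u)).differentiableAt).differentiableWithinAt)
      intro u hu
      rw [interior_Ici] at hu
      rw [((hasDerivAt_Gc hlam (-2) u).add (hasDerivAt_id u)).deriv]
      have hu1 : (1:ℝ) < u := lt_trans hu01 hu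
      have hs : 0 < lam + u ^ 4 := by positivity
      have hp : (0:ℝ) < (lam + u ^ 4) ^ ((7:ℝ)/8) := Real.rpow_pos_of_pos hs _
      have hu4 : (1:ℝ) < u ^ 4 := one_lt_pow₀ hu1 (by norm_num)
      have hu3 : (1:ℝ) < u ^ 3 := one_lt_pow₀ hu1 (by norm_num)
      have h1 : (1:ℝ) ≤ lam + u ^ 4 := by nlinarith
      have h2 : (lam + u ^ 4) ^ ((7:ℝ)/8) ≤ lam + u ^ 4 := by
        calc (lam + u ^ 4) ^ ((7:ℝ)/8) ≤ (lam + u ^ 4) ^ (1:ℝ) :=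
              Real.rpow_le_rpow_of_exponent_le h1 (by norm_num)
          _ = lam + u ^ 4 := Real.rpow_one _
      have hlu : lam < u := by simp only [hu0def, Set.mem_Ioi] at hu; linarith
      have huu : u ≤ u ^ 4 := by nlinarith [hu1, hu3]
      have h3 : lam + u ^ 4 ≤ 3 * u ^ 4 := by nlinarith
      have e : (lam + u ^ 4) ^ (-(7:ℝ)/8) = ((lam + u ^ 4) ^ ((7:ℝ)/8))⁻¹ := by
        rw [← Real.rpow_neg hs.le]; norm_num
      rw [e]
      have h5 : (1:ℝ) ≤ 3 * u ^ 4 * ((lam + u ^ 4) ^ ((7:ℝ)/8))⁻¹ := by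
        rw [← div_eq_mul_inv, le_div_iff₀ hp]; linarith
      nlinarith [h5]
    have hbound : ∀ r : ℝ, u0 ^ 2 ≤ r → F lam r 1 ≤ (Gc lam (-2) u0 + u0) - Real.sqrt r := by
      intro r hr
      have hr0 : (0:ℝ) ≤ r := le_trans (by positivity) hr
      have hsr : u0 ≤ Real.sqrt r := by
        rw [show u0 = Real.sqrt (u0 ^ 2) from (Real.sqrt_sq (by positivity)).symm]
        exact Real.sqrt_le_sqrt hr
      have hk := hK (Set.self_mem_Ici) hsr hsr
      rw [F_eq lam r 1 hr0, show (1:ℝ) - 3 * 1 = -2 by norm_num]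
      simp only at hk
      linarith
    have ht2 : Tendsto (fun r : ℝ => (Gc lam (-2) u0 + u0) - Real.sqrt r) atTop atBot := by
      have hneg : Tendsto (fun r : ℝ => -Real.sqrt r) atTop atBot :=
        tendsto_neg_atTop_atBot.comp sqrt_tendsto_atTop
      simpa [sub_eq_add_neg] using tendsto_atBot_add_const_left atTop (Gc lam (-2) u0 + u0) hneg
    exact tendsto_atBot_mono' atTop
      (by filter_upwards [eventually_ge_atTop (u0 ^ 2)] with r hr using hbound r hr) ht2
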